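/- arXiv:2502.07159 — 3 statements merged into one kernel-verified Lean document; each statement's English description precedes it below -/
import Mathlib

section
/- If $k \leq \sqrt{N}$ (for positive integers $k, N$), then $\prod_{i=0}^{k-1} \frac{N}{N-i} \leq 1 + \frac{k^2}{N}$. -/
/-!
Writing `N / (N - i) = (1 - i / N)⁻¹`, the Weierstrass product inequality bounds
`∏ (1 - i / N)` below by `1 - x` with `x = ∑ i / N = k (k - 1) / (2N) ≤ 1 / 2`,
and `(1 - x)⁻¹ ≤ 1 + 2x` on `[0, 1/2]`.
-/

open Finset

section WeierstrassProduct

variable {ι R : Type*} [CommRing R] [LinearOrder R] [IsStrictOrderedRing R]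

theorem Finset.one_sub_sum_le_prod_one_sub (s : Finset ι) (f : ι → R)
    (h0 : ∀ i ∈ s, 0 ≤ f i) (h1 : ∀ i ∈ s, f i ≤ 1) :
    1 - ∑ i ∈ s, f i ≤ ∏ i ∈ s, (1 - f i) := by
  classical
  induction s using Finset.induction_on with
  | empty => simp
  | insert a s ha ih =>
    rw [sum_insert ha, prod_insert ha]
    have hfa0 := h0 a (mem_insert_self a s)
    have hfa1 := h1 a (mem_insert_self a s)
    have hs0 : 0 ≤ ∑ i ∈ s, f i := sum_nonneg fun i hi ↦ h0 i (mem_insert_of_mem hi)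
    have ih := ih (fun i hi ↦ h0 i (mem_insert_of_mem hi)) fun i hi ↦ h1 i (mem_insert_of_mem hi)
    nlinarith [mul_le_mul_of_nonneg_left ih (sub_nonneg.2 hfa1), mul_nonneg hfa0 hs0]

end WeierstrassProduct

theorem inv_one_sub_le_one_add_two_mul {K : Type*} [Field K] [LinearOrder K]
    [IsStrictOrderedRing K] {x : K} (hx0 : 0 ≤ x) (hx : 2 * x ≤ 1) :
    (1 - x)⁻¹ ≤ 1 + 2 * x := by
  rw [inv_le_iff_one_le_mul₀ (by linarith)]
  nlinarith [mul_nonneg hx0 (sub_nonneg.2 hx)]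

theorem sum_range_cast_mul_two_le_sq {R : Type*} [CommSemiring R] [PartialOrder R]
    [IsOrderedRing R] (k : ℕ) : (∑ i ∈ range k, (i : R)) * 2 ≤ (k : R) ^ 2 := by
  have h : (∑ i ∈ range k, i) * 2 ≤ k ^ 2 := by
    rw [sum_range_id_mul_two, sq]
    exact Nat.mul_le_mul_left k (Nat.sub_le k 1)
  simpa using Nat.mono_cast (α := R) h

theorem prod_range_div_sub_le_one_add_sq_div {N : ℝ} (hN : 0 < N) {k : ℕ}
    (hk : (k : ℝ) ^ 2 ≤ N) :
    ∏ i ∈ range k, N / (N - i) ≤ 1 + (k : ℝ) ^ 2 / N := by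
  set x := (∑ i ∈ range k, (i : ℝ)) / N with hx
  have hx0 : 0 ≤ x := by positivity
  have hx_sq : 2 * x ≤ (k : ℝ) ^ 2 / N := by
    rw [hx, mul_div_assoc', mul_comm, div_le_div_iff_of_pos_right hN]
    exact sum_range_cast_mul_two_le_sq k
  have hx_half : 2 * x ≤ 1 := hx_sq.trans ((div_le_one hN).2 hk)
  have hterm : ∀ i ∈ range k, (i : ℝ) / N ≤ 1 := fun i hi ↦ by
    have := single_le_sum (f := fun j : ℕ ↦ (j : ℝ) / N) (fun j _ ↦ by positivity) hi
    rw [← sum_div] at this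
    linarith
  calc ∏ i ∈ range k, N / (N - i)
      = (∏ i ∈ range k, (1 - (i : ℝ) / N))⁻¹ := by
        rw [← prod_inv_distrib]
        exact prod_congr rfl fun i _ ↦ by rw [one_sub_div hN.ne', inv_div]
    _ ≤ (1 - x)⁻¹ :=
        inv_anti₀ (by linarith)
          (by simpa only [hx, sum_div] using
            one_sub_sum_le_prod_one_sub _ _ (fun i _ ↦ by positivity) hterm)
    _ ≤ 1 + 2 * x := inv_one_sub_le_one_add_two_mul hx0 hx_half
    _ ≤ 1 + (k : ℝ) ^ 2 / N := by linarith

theorem stmt_0_general (N k : ℕ) (hN : 0 < N) (h : (k : ℝ) ≤ Real.sqrt N) :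
    ∏ i ∈ Finset.range k, (N : ℝ) / ((N : ℝ) - i) ≤ 1 + (k : ℝ) ^ 2 / N :=
  prod_range_div_sub_le_one_add_sq_div (Nat.cast_pos.2 hN)
    ((Real.le_sqrt (Nat.cast_nonneg k) (Nat.cast_nonneg N)).1 h)

theorem stmt_0 (N k : ℕ) (hN : 0 < N) (hk : 0 < k) (h : (k : ℝ) ≤ Real.sqrt N) :
    ∏ i ∈ Finset.range k, (N : ℝ) / ((N : ℝ) - i) ≤ 1 + (k : ℝ) ^ 2 / N :=
  stmt_0_general N k hN h
end

section
/- Let $A$ be a row-stochastic matrix indexed by a finite set $\mathcal{U}$ for which the uniform distribution on $\mathcal{U}$ is stationary (i.e., $A$ is doubly stochastic). Let $f, g : \mathcal{U} \to \mathbb{R}$ and suppose that for every $X$ in the support of $f$, the total transition probability from $X$ into the support of $g$ under $A$ is at most $\epsilon$. Then $|\langle f, A g \rangle| \leq \sqrt{\epsilon}\, \|f\|_2 \|g\|_2$, where $\langle f, h \rangle = \sum_{x \in \mathcal{U}} f(x) h(x)$ and $\|f\|_2 = \sqrt{\langle f, f\rangle}$. -/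
/-!
Expand `⟨f, A g⟩ = ∑_{x,y} A(x,y) f(x) g(y)` and apply Cauchy–Schwarz with the weights `A(x,y)`,
keeping only the pairs with `g(y) ≠ 0`. The `f`-side becomes `∑_x f(x)² A(x, supp g) ≤ ε ‖f‖²`,
and the `g`-side is `∑_y g(y)² ∑_x A(x,y) = ‖g‖²` because the columns of `A` sum to one.
-/

open Finset

theorem sq_sum_mul_sum_mul_le {ι κ : Type*} [Fintype ι] [Fintype κ] {A : ι → κ → ℝ}
    (hA : ∀ x y, 0 ≤ A x y) (f : ι → ℝ) (g : κ → ℝ) :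
    (∑ x, f x * ∑ y, A x y * g y) ^ 2 ≤
      (∑ x, f x ^ 2 * ∑ y ∈ univ.filter (fun y => g y ≠ 0), A x y) *
        ∑ y, g y ^ 2 * ∑ x, A x y := by
  have hterm : ∀ p : ι × κ, (A p.1 p.2 * f p.1 * g p.2) ^ 2 ≤
      (if g p.2 ≠ 0 then A p.1 p.2 * f p.1 ^ 2 else 0) * (A p.1 p.2 * g p.2 ^ 2) := by
    rintro ⟨x, y⟩
    by_cases hy : g y = 0
    · simp [hy]
    · rw [if_pos hy]
      exact le_of_eq (by ring)
  have hcs := sum_sq_le_sum_mul_sum_of_sq_le_mul univ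
    (fun p _ => by split_ifs; exacts [mul_nonneg (hA _ _) (sq_nonneg _), le_rfl])
    (fun p _ => mul_nonneg (hA p.1 p.2) (sq_nonneg (g p.2))) (fun p _ => hterm p)
  have hlhs : ∑ x, f x * ∑ y, A x y * g y = ∑ p : ι × κ, A p.1 p.2 * f p.1 * g p.2 := by
    rw [Fintype.sum_prod_type]
    refine sum_congr rfl fun x _ => ?_
    rw [mul_sum]
    exact sum_congr rfl fun y _ => by ring
  have hf : ∑ x, f x ^ 2 * ∑ y ∈ univ.filter (fun y => g y ≠ 0), A x y =
      ∑ p : ι × κ, if g p.2 ≠ 0 then A p.1 p.2 * f p.1 ^ 2 else 0 := by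
    rw [Fintype.sum_prod_type]
    refine sum_congr rfl fun x _ => ?_
    rw [mul_sum, sum_filter]
    exact sum_congr rfl fun y _ => by split_ifs <;> ring
  have hg : ∑ y, g y ^ 2 * ∑ x, A x y = ∑ p : ι × κ, A p.1 p.2 * g p.2 ^ 2 := by
    rw [Fintype.sum_prod_type_right]
    refine sum_congr rfl fun y _ => ?_
    rw [mul_sum]
    exact sum_congr rfl fun x _ => by ring
  rwa [hlhs, hf, hg]

theorem sum_sq_mul_le_mul_sum_sq {ι : Type*} (s : Finset ι) {f w : ι → ℝ} {ε : ℝ}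
    (hw : ∀ x ∈ s, f x ≠ 0 → w x ≤ ε) :
    ∑ x ∈ s, f x ^ 2 * w x ≤ ε * ∑ x ∈ s, f x ^ 2 := by
  rw [mul_sum]
  refine sum_le_sum fun x hx => ?_
  by_cases hfx : f x = 0
  · simp [hfx]
  · rw [mul_comm ε]
    exact mul_le_mul_of_nonneg_left (hw x hx hfx) (sq_nonneg _)

theorem stmt_2_general {U : Type*} [Fintype U] (A : U → U → ℝ) (ε : ℝ)
    (hnn : ∀ x y, 0 ≤ A x y)
    (hcol : ∀ y, ∑ x, A x y = 1)
    (f g : U → ℝ)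
    (hesc : ∀ x, f x ≠ 0 → ∑ y ∈ Finset.univ.filter (fun y => g y ≠ 0), A x y ≤ ε) :
    |∑ x, f x * ∑ y, A x y * g y|
      ≤ Real.sqrt ε * Real.sqrt (∑ x, f x ^ 2) * Real.sqrt (∑ x, g x ^ 2) := by
  have hf : ∑ x, f x ^ 2 * ∑ y ∈ univ.filter (fun y => g y ≠ 0), A x y ≤ ε * ∑ x, f x ^ 2 :=
    sum_sq_mul_le_mul_sum_sq univ fun x _ => hesc x
  have hg : ∑ y, g y ^ 2 * ∑ x, A x y = ∑ y, g y ^ 2 := by simp [hcol]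
  have hsq := (sq_sum_mul_sum_mul_le hnn f g).trans
    (mul_le_mul_of_nonneg_right hf (by rw [hg]; positivity))
  rw [hg, mul_assoc] at hsq
  rw [mul_assoc, ← Real.sqrt_mul (by positivity), ← Real.sqrt_mul' _ (by positivity)]
  exact Real.abs_le_sqrt hsq

theorem stmt_2 {U : Type*} [Fintype U] [DecidableEq U] (A : U → U → ℝ) (ε : ℝ)
    (hnn : ∀ x y, 0 ≤ A x y)
    (hrow : ∀ x, ∑ y, A x y = 1)
    (hcol : ∀ y, ∑ x, A x y = 1)
    (f g : U → ℝ)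
    (hesc : ∀ x, f x ≠ 0 → ∑ y ∈ Finset.univ.filter (fun y => g y ≠ 0), A x y ≤ ε) :
    |∑ x, f x * ∑ y, A x y * g y|
      ≤ Real.sqrt ε * Real.sqrt (∑ x, f x ^ 2) * Real.sqrt (∑ x, g x ^ 2) :=
  stmt_2_general A ε hnn hcol f g hesc
end

section
/- With $Q_{m,m-1,k}$ and $Q_{m,m,k}$ the resampling operators on real functions on $(\{\pm1\}^m)^k$ (fixing one uniformly random coordinate vs. rerandomizing everything), for every $f : (\{\pm1\}^m)^k \to \mathbb{R}$ we have $|\langle f, (Q_{m,m-1,k} - Q_{m,m,k}) f \rangle| \leq \frac{1}{m} \langle f, f \rangle$. -/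
/-!
Let `E_a` be the conditional expectation given the `a`-th coordinate of each of the `k` vectors
and `E` the full average, so that `Q_{m,m-1,k} - Q_{m,m,k} = (1/m) ∑_a (E_a - E)`. The operators
`E_a` and `E` are orthogonal projections with `E E_a = E_a E = E`, and `E_a E_b = E` for `a ≠ b`
because distinct coordinates are independent. Hence the `E_a - E` are mutually orthogonal
projections, their sum `P` is an orthogonal projection, and `0 ≤ ⟨f, P f⟩ ≤ ⟨f, f⟩`.
-/

open Finset Matrix Fintype

open scoped MatrixOrder in
theorem dotProduct_mulVec_mem_Icc_of_isStarProjection {n : Type*} [Fintype n] [DecidableEq n]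
    {P : Matrix n n ℝ} (hP : IsStarProjection P) (f : n → ℝ) :
    f ⬝ᵥ (P *ᵥ f) ∈ Set.Icc 0 (f ⬝ᵥ f) := by
  have h0 := hP.nonneg.posSemidef.dotProduct_mulVec_nonneg f
  have h1 := hP.one_sub_nonneg.posSemidef.dotProduct_mulVec_nonneg f
  simp only [star_trivial, sub_mulVec, one_mulVec, dotProduct_sub, sub_nonneg] at h0 h1
  exact ⟨h0, h1⟩

theorem isStarProjection_sum {R ι : Type*} [NonUnitalSemiring R] [StarRing R] {p : ι → R}
    {s : Finset ι} (hp : ∀ i ∈ s, IsStarProjection (p i))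
    (horth : ∀ i ∈ s, ∀ j ∈ s, i ≠ j → p i * p j = 0) :
    IsStarProjection (∑ i ∈ s, p i) := by
  classical
  induction s using Finset.induction_on with
  | empty => simp [IsStarProjection.zero]
  | insert i s hi ih =>
    rw [sum_insert hi]
    refine (hp i (mem_insert_self i s)).add
      (ih (fun j hj => hp j (mem_insert_of_mem hj))
        (fun j hj l hl => horth j (mem_insert_of_mem hj) l (mem_insert_of_mem hl))) ?_
    rw [mul_sum]
    exact sum_eq_zero fun j hj =>
      horth i (mem_insert_self i s) j (mem_insert_of_mem hj) (ne_of_mem_of_not_mem hj hi).symm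

variable {κ ι β : Type*} [Fintype κ] [DecidableEq κ] [Fintype ι] [DecidableEq ι] [Fintype β]
  [DecidableEq β]

theorem card_filter_forall_forall_mem_eq (s : Finset ι) (W : κ → ι → β) :
    #{Y : κ → ι → β | ∀ i, ∀ j ∈ s, Y i j = W i j} =
      card β ^ ((card ι - #s) * card κ) := by
  have : ({Y | ∀ i, ∀ j ∈ s, Y i j = W i j} : Finset (κ → ι → β)) =
      piFinset fun i => piFinset fun j => if j ∈ s then {W i j} else univ := by
    ext Y
    simp only [mem_filter, mem_univ, true_and, mem_piFinset]
    refine forall_congr' fun i => ⟨fun h j => ?_, fun h j hj => by simpa [hj] using h j⟩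
    split_ifs with hj
    exacts [mem_singleton.mpr (h j hj), mem_univ _]
  rw [this, card_piFinset, ← card_compl, pow_mul]
  simp only [card_piFinset, apply_ite, card_singleton, card_univ, prod_ite, prod_const_one,
    one_mul, filter_mem_eq_of_subset (subset_univ s), filter_notMem_eq_sdiff,
    ← compl_eq_univ_sdiff, prod_const]

theorem card_filter_forall_eq (a : ι) (X : κ → ι → β) :
    #{Y : κ → ι → β | ∀ i, Y i a = X i a} = card β ^ ((card ι - 1) * card κ) := by
  simpa using card_filter_forall_forall_mem_eq {a} X

theorem card_filter_forall_eq_and_forall_eq {a b : ι} (hab : a ≠ b) (X Z : κ → ι → β) :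
    #{Y : κ → ι → β | (∀ i, Y i a = X i a) ∧ ∀ i, Z i b = Y i b} =
      card β ^ ((card ι - 2) * card κ) := by
  have h := card_filter_forall_forall_mem_eq {a, b} fun i j => if j = a then X i a else Z i b
  rw [card_pair hab] at h
  rw [← h]
  congr 1
  ext Y
  simp [forall_and, hab.symm, eq_comm (a := Z _ b)]

theorem cast_card_pow_pred_ne_zero (a : ι) (X : κ → ι → β) :
    (card β : ℝ) ^ ((card ι - 1) * card κ) ≠ 0 := by
  rw [← Nat.cast_pow, ← card_filter_forall_eq a X, Nat.cast_ne_zero]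
  exact (card_pos.mpr ⟨X, by simp⟩).ne'

variable (κ β) in
noncomputable def condAvgMatrix (a : ι) : Matrix (κ → ι → β) (κ → ι → β) ℝ :=
  of fun X Y =>
    if ∀ i, Y i a = X i a then ((card β : ℝ) ^ ((card ι - 1) * card κ))⁻¹ else 0

variable (κ ι β) in
noncomputable def avgMatrix : Matrix (κ → ι → β) (κ → ι → β) ℝ :=
  of fun _ _ => ((card β : ℝ) ^ (card ι * card κ))⁻¹

theorem condAvgMatrix_mul_apply (a : ι) (M : Matrix (κ → ι → β) (κ → ι → β) ℝ)
    (X Z : κ → ι → β) :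
    (condAvgMatrix κ β a * M) X Z =
      ((card β : ℝ) ^ ((card ι - 1) * card κ))⁻¹ *
        ∑ Y with ∀ i, Y i a = X i a, M Y Z := by
  simp [condAvgMatrix, mul_apply, ite_mul, sum_filter, mul_sum]

theorem condAvgMatrix_mul_self (a : ι) :
    condAvgMatrix κ β a * condAvgMatrix κ β a = condAvgMatrix κ β a := by
  ext X Z
  have hc := cast_card_pow_pred_ne_zero a X
  have hfiber : ∀ Y ∈ ({Y | ∀ i, Y i a = X i a} : Finset (κ → ι → β)),
      condAvgMatrix κ β a Y Z = condAvgMatrix κ β a X Z := by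
    intro Y hY
    simp only [mem_filter, mem_univ, true_and] at hY
    simp [condAvgMatrix, hY]
  rw [condAvgMatrix_mul_apply, sum_congr rfl hfiber, sum_const, card_filter_forall_eq,
    nsmul_eq_mul]
  push_cast
  field_simp

theorem condAvgMatrix_mul_avgMatrix (a : ι) :
    condAvgMatrix κ β a * avgMatrix κ ι β = avgMatrix κ ι β := by
  ext X Z
  have hc := cast_card_pow_pred_ne_zero a X
  rw [condAvgMatrix_mul_apply]
  simp only [avgMatrix, of_apply, sum_const, card_filter_forall_eq, nsmul_eq_mul]
  push_cast
  field_simp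

theorem condAvgMatrix_mul_of_ne {a b : ι} (hab : a ≠ b) :
    condAvgMatrix κ β a * condAvgMatrix κ β b = avgMatrix κ ι β := by
  ext X Z
  rw [condAvgMatrix_mul_apply]
  simp only [condAvgMatrix, of_apply, ← sum_filter, sum_const, filter_filter,
    card_filter_forall_eq_and_forall_eq hab, nsmul_eq_mul, avgMatrix]
  push_cast
  have hc := cast_card_pow_pred_ne_zero a X
  set c : ℝ := (card β : ℝ) ^ ((card ι - 1) * card κ)
  set N : ℝ := (card β : ℝ) ^ (card ι * card κ)
  have hι : 2 ≤ card ι := Fintype.one_lt_card_iff.mpr ⟨a, b, hab⟩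
  have hcc : c * c = N * (card β : ℝ) ^ ((card ι - 2) * card κ) := by
    rw [← pow_add, ← pow_add, ← add_mul, ← add_mul]
    congr 2
    omega
  have hN : N ≠ 0 := left_ne_zero_of_mul (hcc ▸ mul_ne_zero hc hc)
  field_simp
  linear_combination hcc.symm

theorem isStarProjection_condAvgMatrix (a : ι) : IsStarProjection (condAvgMatrix κ β a) := by
  refine ⟨condAvgMatrix_mul_self a, ?_⟩
  ext X Y
  simp [condAvgMatrix, eq_comm]

omit [DecidableEq β] in
theorem isStarProjection_avgMatrix : IsStarProjection (avgMatrix κ ι β) := by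
  refine ⟨?_, by ext X Y; simp [avgMatrix]⟩
  ext X Z
  have hN : ((card β : ℝ) ^ (card ι * card κ)) ≠ 0 := by
    have : Nonempty (κ → ι → β) := ⟨X⟩
    have h : card (κ → ι → β) ≠ 0 := card_ne_zero
    rw [card_fun, card_fun, ← pow_mul] at h
    exact_mod_cast h
  simp only [avgMatrix, mul_apply, of_apply, sum_const, card_univ, card_fun, nsmul_eq_mul]
  push_cast
  rw [← pow_mul]
  field_simp

theorem avgMatrix_mul_condAvgMatrix (a : ι) :
    avgMatrix κ ι β * condAvgMatrix κ β a = avgMatrix κ ι β := by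
  simpa [(isStarProjection_condAvgMatrix a).isSelfAdjoint.star_eq,
    isStarProjection_avgMatrix.isSelfAdjoint.star_eq]
    using congr(star $(condAvgMatrix_mul_avgMatrix (κ := κ) (β := β) a))

variable (κ β) in
noncomputable def projMatrix (a : ι) : Matrix (κ → ι → β) (κ → ι → β) ℝ :=
  condAvgMatrix κ β a - avgMatrix κ ι β

theorem isStarProjection_projMatrix (a : ι) : IsStarProjection (projMatrix κ β a) :=
  isStarProjection_avgMatrix.sub_of_mul_eq_left (isStarProjection_condAvgMatrix a)
    (avgMatrix_mul_condAvgMatrix a)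

theorem projMatrix_mul_of_ne {a b : ι} (hab : a ≠ b) :
    projMatrix κ β a * projMatrix κ β b = 0 := by
  simp only [projMatrix, mul_sub, sub_mul, condAvgMatrix_mul_of_ne hab,
    condAvgMatrix_mul_avgMatrix, avgMatrix_mul_condAvgMatrix,
    isStarProjection_avgMatrix.isIdempotentElem.eq, sub_self]

theorem isStarProjection_sum_projMatrix : IsStarProjection (∑ a : ι, projMatrix κ β a) :=
  isStarProjection_sum (fun a _ => isStarProjection_projMatrix a)
    fun _ _ _ _ hab => projMatrix_mul_of_ne hab

theorem condAvgMatrix_mulVec_apply (a : ι) (f : (κ → ι → β) → ℝ)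
    (X : κ → ι → β) :
    (condAvgMatrix κ β a *ᵥ f) X =
      ((card β : ℝ) ^ ((card ι - 1) * card κ))⁻¹ *
        ∑ Y with ∀ i, Y i a = X i a, f Y := by
  simp [condAvgMatrix, mulVec, dotProduct, ite_mul, sum_filter, mul_sum]

omit [DecidableEq β] in
theorem avgMatrix_mulVec_apply (f : (κ → ι → β) → ℝ) (X : κ → ι → β) :
    (avgMatrix κ ι β *ᵥ f) X = ((card β : ℝ) ^ (card ι * card κ))⁻¹ * ∑ Y, f Y := by
  simp [avgMatrix, mulVec, dotProduct, mul_sum]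

theorem stmt_7 (m k : ℕ) (hm : 0 < m) (f : (Fin k → Fin m → Bool) → ℝ) :
    let Qm1 : ((Fin k → Fin m → Bool) → ℝ) → ((Fin k → Fin m → Bool) → ℝ) :=
      fun g X => (m : ℝ)⁻¹ * ∑ a : Fin m, ((2 : ℝ) ^ ((m - 1) * k))⁻¹ *
        ∑ Y ∈ Finset.univ.filter (fun Y : Fin k → Fin m → Bool => ∀ i, Y i a = X i a), g Y
    let Qm : ((Fin k → Fin m → Bool) → ℝ) → ((Fin k → Fin m → Bool) → ℝ) :=
      fun g _ => ((2 : ℝ) ^ (m * k))⁻¹ * ∑ Y : Fin k → Fin m → Bool, g Y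
    |∑ X : Fin k → Fin m → Bool, f X * (Qm1 f X - Qm f X)|
      ≤ (m : ℝ)⁻¹ * ∑ X : Fin k → Fin m → Bool, f X * f X := by
  intro Qm1 Qm
  set P := ∑ a : Fin m, projMatrix (Fin k) Bool a
  have hQ : ∀ X, Qm1 f X - Qm f X = (m : ℝ)⁻¹ * (P *ᵥ f) X := by
    intro X
    simp only [P, projMatrix, sum_mulVec, sub_mulVec, Finset.sum_apply, Pi.sub_apply,
      condAvgMatrix_mulVec_apply, avgMatrix_mulVec_apply]
    simp only [Qm1, Qm, sum_sub_distrib, sum_const, card_univ, Fintype.card_fin, card_bool,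
      nsmul_eq_mul]
    push_cast
    rw [mul_sub, ← mul_assoc, inv_mul_cancel₀ (by exact_mod_cast hm.ne'), one_mul]
    -- the two sides differ only in the decidability instances of their filters
    congr!
  have hinner : ∑ X, f X * (Qm1 f X - Qm f X) = (m : ℝ)⁻¹ * (f ⬝ᵥ (P *ᵥ f)) := by
    simp_rw [hQ, dotProduct, mul_sum, mul_left_comm]
  obtain ⟨hnonneg, hle⟩ :=
    dotProduct_mulVec_mem_Icc_of_isStarProjection isStarProjection_sum_projMatrix f
  rw [hinner, abs_of_nonneg (mul_nonneg (by positivity) hnonneg)]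
  exact mul_le_mul_of_nonneg_left hle (by positivity)
end
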